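/- arXiv:1803.08524 — 3 statements merged into one kernel-verified Lean document; each statement's English description precedes it below -/
import Mathlib

section
/- Let X be a type and let Div X := (X →₀ ℤ) be the free abelian group on X. Let D_1, …, D_n ∈ Div X be nonzero elements each of whose coefficients lies in {0, 1} (i.e., each D_i is a reduced divisor), and suppose the supports of the D_i are pairwise disjoint. Then the subgroup W generated by D_1, …, D_n is a direct summand of Div X: there exists a subgroup W' of Div X with Div X = W ⊕ W' (internal direct sum). -/
/-!
Choose a point `xᵢ` in the support of each `Dᵢ`. Reducedness gives `Dᵢ(xᵢ) = 1` and disjointness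
gives `Dⱼ(xᵢ) = 0` for `j ≠ i`, so the evaluations at the `xᵢ` are dual to the `Dᵢ`. Then
`v ↦ ∑ᵢ v(xᵢ) Dᵢ` is an idempotent endomorphism of `Div X` with image `W`, and its kernel is a
complement of `W`.
-/

open LinearMap

section Biorthogonal

variable {R M ι : Type*} [Ring R] [AddCommGroup M] [Module R M] [Fintype ι] [DecidableEq ι]
  {v : ι → M} {φ : ι → Module.Dual R M}

lemma sum_smulRight_apply_of_biorthogonal (h : ∀ i j, φ i (v j) = if i = j then 1 else 0)
    (j : ι) : (∑ i, (φ i).smulRight (v i)) (v j) = v j := by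
  simp [h]

lemma isIdempotentElem_sum_smulRight_of_biorthogonal
    (h : ∀ i j, φ i (v j) = if i = j then 1 else 0) :
    IsIdempotentElem (∑ i, (φ i).smulRight (v i)) := by
  ext x
  set P := ∑ i, (φ i).smulRight (v i)
  have hP : ∀ j, P (v j) = v j := sum_smulRight_apply_of_biorthogonal h
  calc P (P x) = P (∑ i, φ i x • v i) := by simp only [P, LinearMap.sum_apply, smulRight_apply]
    _ = ∑ i, φ i x • v i := by simp only [map_sum, map_smul, hP]
    _ = P x := by simp only [P, LinearMap.sum_apply, smulRight_apply]

lemma range_sum_smulRight_of_biorthogonal (h : ∀ i j, φ i (v j) = if i = j then 1 else 0) :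
    range (∑ i, (φ i).smulRight (v i)) = Submodule.span R (Set.range v) := by
  apply le_antisymm
  · rintro _ ⟨x, rfl⟩
    simp only [LinearMap.sum_apply, smulRight_apply]
    exact Submodule.sum_mem _ fun i _ => Submodule.smul_mem _ _ (Submodule.subset_span ⟨i, rfl⟩)
  · rw [Submodule.span_le]
    rintro _ ⟨j, rfl⟩
    exact ⟨v j, sum_smulRight_apply_of_biorthogonal h j⟩

theorem Submodule.exists_isCompl_span_of_biorthogonal
    (h : ∀ i j, φ i (v j) = if i = j then 1 else 0) :
    ∃ W : Submodule R M, IsCompl (span R (Set.range v)) W :=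
  ⟨_, range_sum_smulRight_of_biorthogonal h ▸
    (isIdempotentElem_sum_smulRight_of_biorthogonal h).isCompl⟩

end Biorthogonal

lemma Finsupp.exists_biorthogonal_points {X ι R : Type*} [Zero R] [One R] [DecidableEq ι]
    (D : ι → X →₀ R) (hne : ∀ i, D i ≠ 0) (hred : ∀ i, ∀ x : X, D i x = 0 ∨ D i x = 1)
    (hdisj : ∀ i j, i ≠ j → Disjoint (D i).support (D j).support) :
    ∃ x : ι → X, ∀ i j, D j (x i) = if i = j then 1 else 0 := by
  choose x hx using fun i => Finsupp.support_nonempty_iff.mpr (hne i)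
  refine ⟨x, fun i j => ?_⟩
  split_ifs with hij
  · subst hij
    exact (hred i (x i)).resolve_left (Finsupp.mem_support_iff.mp (hx i))
  · exact Finsupp.notMem_support_iff.mp
      fun hj => Finset.disjoint_left.mp (hdisj i j hij) (hx i) hj

/-- Lemma 3.1(a): if `D_1, …, D_n` are reduced divisors (nonzero, all coefficients `0`
or `1`) on `X` with pairwise disjoint supports, then the subgroup they generate is a
direct summand of the divisor group `Div X = X →₀ ℤ`. -/
theorem reduced_divisors_generate_direct_summand
    {X : Type*} (n : ℕ) (D : Fin n → (X →₀ ℤ))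
    (hne : ∀ i, D i ≠ 0)
    (hred : ∀ i, ∀ x : X, D i x = 0 ∨ D i x = 1)
    (hdisj : ∀ i j, i ≠ j → Disjoint (D i).support (D j).support) :
    ∃ W' : AddSubgroup (X →₀ ℤ),
      IsCompl (AddSubgroup.closure (Set.range D)) W' := by
  obtain ⟨x, hx⟩ := Finsupp.exists_biorthogonal_points D hne hred hdisj
  obtain ⟨W, hW⟩ := Submodule.exists_isCompl_span_of_biorthogonal
    (φ := fun i => Finsupp.lapply (R := ℤ) (x i)) hx
  refine ⟨W.toAddSubgroup, ?_⟩
  rw [← Submodule.span_int_eq_addSubgroupClosure]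
  exact AddSubgroup.toIntSubmodule.symm.isCompl hW
end

section
/- Let X be a type and let Div X := (X →₀ ℤ) be the free abelian group on X. Define the degree map deg : Div X → ℤ by deg(D) = sum of the coefficients of D, and set Div⁰ X := ker(deg). Let D_1, …, D_n ∈ Div X be nonzero elements each of whose coefficients lies in {0, 1}, with pairwise disjoint supports; let W be the subgroup they generate and W⁰ := W ∩ Div⁰ X. Then the quotient groups (Div X)/W, (Div X)/W⁰, and (Div⁰ X)/W⁰ are all torsion-free. -/
/-!
Evaluating an integer combination `∑ cᵢ • Dᵢ` at a point of the support of `Dᵢ` returns `cᵢ`,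
because the `Dᵢ` are reduced with disjoint supports. Hence if `m • f ∈ W` with `m ≠ 0`, every
coefficient `cᵢ` with `Dᵢ ≠ 0` is divisible by `m` and `f = ∑ (cᵢ / m) • Dᵢ ∈ W`: the subgroup `W`
is saturated. The kernel of the degree is saturated because `ℤ` is torsion-free, saturation
passes to intersections and preimages, and the quotient by a saturated subgroup is torsion-free.
-/

/-- The degree of a divisor in `Div X = X →₀ ℤ`: the sum of its coefficients. -/
noncomputable def divDeg {X : Type*} : (X →₀ ℤ) →+ ℤ :=
  (Finsupp.linearCombination ℤ (fun _ : X => (1 : ℤ))).toAddMonoidHom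

/-- A predicate on an additive monoid saying that only 0 is of finite order
(the Mathlib definition of December 2024, since removed). -/
def AddMonoid.IsTorsionFree (G : Type*) [AddMonoid G] : Prop :=
  ∀ g : G, g ≠ 0 → ¬IsOfFinAddOrder g

namespace AddSubmonoid.NSMulSaturated

variable {M N : Type*} [AddMonoid M] [AddMonoid N] {H K : AddSubmonoid M}

theorem inf (hH : H.NSMulSaturated) (hK : K.NSMulSaturated) : (H ⊓ K).NSMulSaturated :=
  fun _ _ h => (hH h.1).elim .inl fun hg => (hK h.2).imp id fun hg' => ⟨hg, hg'⟩

theorem comap (hH : H.NSMulSaturated) (f : N →+ M) : (H.comap f).NSMulSaturated :=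
  fun n g h => hH (map_nsmul f n g ▸ h)

end AddSubmonoid.NSMulSaturated

theorem QuotientAddGroup.isTorsionFree_of_nsmulSaturated {G : Type*} [AddGroup G]
    {H : AddSubgroup G} [H.Normal] (hH : H.NSMulSaturated) :
    AddMonoid.IsTorsionFree (G ⧸ H) := by
  intro g hg hfin
  obtain ⟨f, rfl⟩ := QuotientAddGroup.mk_surjective g
  obtain ⟨m, hm, hmf⟩ := isOfFinAddOrder_iff_nsmul_eq_zero.mp hfin
  rw [← QuotientAddGroup.mk_nsmul, QuotientAddGroup.eq_zero_iff] at hmf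
  exact hg ((QuotientAddGroup.eq_zero_iff f).mpr ((hH hmf).resolve_left hm.ne'))

section ReducedDivisors

variable {X ι : Type*} {D : ι → X →₀ ℤ}

theorem linearCombination_apply_of_mem_support (hred : ∀ i x, D i x = 0 ∨ D i x = 1)
    (hdisj : Pairwise fun i j => Disjoint (D i).support (D j).support)
    (c : ι →₀ ℤ) {i : ι} {x : X} (hx : x ∈ (D i).support) :
    Finsupp.linearCombination ℤ D c x = c i := by
  have hDx : D i x = 1 := (hred i x).resolve_left (Finsupp.mem_support_iff.mp hx)
  rw [Finsupp.linearCombination_apply, Finsupp.sum_apply, Finsupp.sum_eq_single i]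
  · simp [hDx]
  · intro j _ hji
    simp [Finsupp.notMem_support_iff.mp (Finset.disjoint_right.mp (hdisj hji) hx)]
  · simp

theorem nsmulSaturated_closure_range (hred : ∀ i x, D i x = 0 ∨ D i x = 1)
    (hdisj : Pairwise fun i j => Disjoint (D i).support (D j).support) :
    (AddSubgroup.closure (Set.range D)).NSMulSaturated := by
  intro m f hmf
  refine or_iff_not_imp_left.mpr fun hm => ?_
  rw [← Submodule.span_int_eq_addSubgroupClosure] at hmf ⊢
  obtain ⟨c, hc⟩ := Finsupp.mem_span_range_iff_exists_finsupp.mp hmf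
  have hdvd : ∀ i, D i ≠ 0 → (m : ℤ) ∣ c i := by
    intro i hi
    obtain ⟨x, hx⟩ := Finsupp.support_nonempty_iff.mpr hi
    refine ⟨f x, ?_⟩
    rw [← linearCombination_apply_of_mem_support hred hdisj c hx,
      Finsupp.linearCombination_apply, hc]
    simp
  have hf : f = c.sum fun i a => (a / m) • D i := by
    refine IsAddTorsionFree.nsmul_right_injective hm ?_
    simp only [Finsupp.smul_sum, ← hc]
    refine Finsupp.sum_congr fun i _ => ?_
    by_cases hi : D i = 0
    · simp [hi]
    · rw [← natCast_zsmul, smul_smul, Int.mul_ediv_cancel' (hdvd i hi)]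
  rw [hf]
  exact Submodule.finsuppSum_mem _ _ _ _ fun i _ =>
    Submodule.smul_mem _ _ (Submodule.subset_span ⟨i, rfl⟩)

end ReducedDivisors

theorem reduced_divisors_quotients_torsion_free_general
    {X : Type*} (n : ℕ) (D : Fin n → (X →₀ ℤ))
    (hred : ∀ i, ∀ x : X, D i x = 0 ∨ D i x = 1)
    (hdisj : ∀ i j, i ≠ j → Disjoint (D i).support (D j).support)
    (W : AddSubgroup (X →₀ ℤ)) (hW : W = AddSubgroup.closure (Set.range D)) :
    AddMonoid.IsTorsionFree ((X →₀ ℤ) ⧸ W) ∧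
    AddMonoid.IsTorsionFree ((X →₀ ℤ) ⧸ (W ⊓ (divDeg (X := X)).ker)) ∧
    AddMonoid.IsTorsionFree
      (↥(divDeg (X := X)).ker ⧸ (W.comap (divDeg (X := X)).ker.subtype)) := by
  have hW_sat : W.NSMulSaturated := hW ▸ nsmulSaturated_closure_range hred hdisj
  have hdeg_sat : (divDeg (X := X)).ker.NSMulSaturated := AddSubmonoid.ker_saturated divDeg
  exact ⟨QuotientAddGroup.isTorsionFree_of_nsmulSaturated hW_sat,
    QuotientAddGroup.isTorsionFree_of_nsmulSaturated (hW_sat.inf hdeg_sat),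
    QuotientAddGroup.isTorsionFree_of_nsmulSaturated
      (hW_sat.comap (divDeg (X := X)).ker.subtype)⟩

/-- Lemma 3.1(b): if `D_1, …, D_n` are reduced divisors on `X` with pairwise disjoint
supports, `W` the subgroup they generate, `Div⁰ X` the kernel of the degree map and
`W⁰ = W ∩ Div⁰ X`, then `(Div X)/W`, `(Div X)/W⁰` and `(Div⁰ X)/W⁰` are torsion-free. -/
theorem reduced_divisors_quotients_torsion_free
    {X : Type*} (n : ℕ) (D : Fin n → (X →₀ ℤ))
    (hne : ∀ i, D i ≠ 0)
    (hred : ∀ i, ∀ x : X, D i x = 0 ∨ D i x = 1)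
    (hdisj : ∀ i j, i ≠ j → Disjoint (D i).support (D j).support)
    (W : AddSubgroup (X →₀ ℤ)) (hW : W = AddSubgroup.closure (Set.range D)) :
    AddMonoid.IsTorsionFree ((X →₀ ℤ) ⧸ W) ∧
    AddMonoid.IsTorsionFree ((X →₀ ℤ) ⧸ (W ⊓ (divDeg (X := X)).ker)) ∧
    AddMonoid.IsTorsionFree
      (↥(divDeg (X := X)).ker ⧸ (W.comap (divDeg (X := X)).ker.subtype)) :=
  reduced_divisors_quotients_torsion_free_general n D hred hdisj W hW
end

section
/- Let G be a group acting on sets X and Y, and let ∧²X denote the set of 2-element subsets of X (equivalently, unordered pairs {x, x'} with x ≠ x'), with its induced G-action. Suppose the cardinality of X is not equal to 2, and suppose there exists an injective G-equivariant map Ψ' : ∧²X → Y, i.e., Ψ'({g·x, g·x'}) = g·Ψ'({x, x'}) for all g ∈ G and all x ≠ x'. Then every g ∈ G that fixes Y pointwise also fixes X pointwise. -/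
/-!
Since `Ψ'` is injective and equivariant, an element fixing `Y` pointwise maps every 2-element
subset of `X` onto itself. If it moved some `x`, then `{x, z}` with `z ∉ {x, g • x}` would be
moved; such a `z` exists exactly because `X` does not have two elements.
-/

theorem exists_ne_ne_of_natCard_ne_two {X : Type*} (hX : Nat.card X ≠ 2) {x y : X}
    (hxy : x ≠ y) : ∃ z : X, z ≠ x ∧ z ≠ y := by
  by_contra! h
  refine hX (Nat.card_eq_two_iff.mpr ⟨x, y, hxy, Set.eq_univ_of_forall fun z => ?_⟩)
  by_cases hzx : z = x
  · exact Or.inl hzx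
  · exact Or.inr (h z hzx)

theorem eq_self_of_forall_ne_mem_pair {X : Type*} (hX : Nat.card X ≠ 2) {f : X → X}
    (hf : ∀ x z : X, x ≠ z → f x = x ∨ f x = z) (x : X) : f x = x := by
  by_contra hx
  obtain ⟨z, hzx, hzfx⟩ := exists_ne_ne_of_natCard_ne_two hX (Ne.symm hx)
  rcases hf x z (Ne.symm hzx) with h | h
  · exact hx h
  · exact hzfx h.symm

theorem image_smul_eq_of_forall_smul_eq {G X Y : Type*} [Group G] [MulAction G X]
    [MulAction G Y] [DecidableEq X] {Ψ' : {s : Finset X // s.card = 2} → Y}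
    (hinj : Function.Injective Ψ')
    (hequiv : ∀ (g : G) (s t : {s : Finset X // s.card = 2}),
      t.1 = s.1.image (fun x => g • x) → Ψ' t = g • Ψ' s)
    {g : G} (hgY : ∀ y : Y, g • y = y) {s : Finset X} (hs : s.card = 2) :
    s.image (fun x => g • x) = s := by
  have hcard : (s.image (fun x => g • x)).card = 2 := by
    rw [Finset.card_image_of_injective _ (MulAction.injective g), hs]
  have hΨ : Ψ' ⟨_, hcard⟩ = Ψ' ⟨s, hs⟩ := (hequiv g ⟨s, hs⟩ ⟨_, hcard⟩ rfl).trans (hgY _)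
  exact congrArg Subtype.val (hinj hΨ)

/-- Lemma 7.2(c): if `G` acts on `X` and `Y`, the cardinality of `X` is not `2`, and
there is an injective `G`-equivariant map `Ψ' : ∧²X → Y` from the set of 2-element
subsets of `X`, then every `g ∈ G` fixing `Y` pointwise fixes `X` pointwise. -/
theorem fixes_of_equivariant_injection_pairs
    {G X Y : Type*} [Group G] [MulAction G X] [MulAction G Y] [DecidableEq X]
    (hX : Nat.card X ≠ 2)
    (Ψ' : {s : Finset X // s.card = 2} → Y)
    (hinj : Function.Injective Ψ')
    (hequiv : ∀ (g : G) (s t : {s : Finset X // s.card = 2}),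
      t.1 = s.1.image (fun x => g • x) → Ψ' t = g • Ψ' s)
    (g : G) (hgY : ∀ y : Y, g • y = y) :
    ∀ x : X, g • x = x := by
  refine eq_self_of_forall_ne_mem_pair hX fun x z hxz => ?_
  have hfix := image_smul_eq_of_forall_smul_eq hinj hequiv hgY (Finset.card_pair hxz)
  have hmem : g • x ∈ ({x, z} : Finset X) := by
    rw [← hfix]
    exact Finset.mem_image_of_mem _ (Finset.mem_insert_self x {z})
  simpa using hmem
end
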